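/- Let n ≥ 2. There exist a shelling of Δ_n with restriction-number multiset δ_n = {r_2, …, r_{t_n}} (t_n = 2^n − 1) and a shelling of Δ_{n+1} with restriction-number multiset δ_{n+1} = {r'_2, …, r'_{t_{n+1}}} (t_{n+1} = 2^{n+1} − 1) such that, as multisets, δ_{n+1} = {1} ∪ δ_n ∪ {2} ∪ (δ_n + 1), where δ_n + 1 denotes the multiset obtained from δ_n by adding 1 to each element. -/

import Mathlib

/-- A subset of the vertex set `{xᵢ, yᵢ, zᵢ : 1 ≤ i ≤ n}` (identified with
`Fin n × Fin 3`, where `(i,0) = xᵢ`, `(i,1) = yᵢ`, `(i,2) = zᵢ`) is a face of `Δₙ`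
iff it contains no triple `{xᵢ, yᵢ, z_j}` with `i < j`. -/
def IsFaceOf (n : ℕ) (F : Finset (Fin n × Fin 3)) : Prop :=
  ¬ ∃ i j : Fin n, i < j ∧ (i, 0) ∈ F ∧ (i, 1) ∈ F ∧ (j, 2) ∈ F

/-- A facet of `Δₙ` is a maximal face. -/
def IsFacetOf (n : ℕ) (F : Finset (Fin n × Fin 3)) : Prop :=
  IsFaceOf n F ∧ ∀ G : Finset (Fin n × Fin 3), IsFaceOf n G → F ⊆ G → F = G

/-- `F₁, …, F_t` is an enumeration of the facets of `Δₙ` which is a shelling: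
for all `i < j` there exists `k < j` with `Fᵢ ∩ F_j ⊆ F_k ∩ F_j` and `|F_j \ F_k| = 1`. -/
def IsShelling (n t : ℕ) (F : Fin t → Finset (Fin n × Fin 3)) : Prop :=
  Function.Injective F ∧
  (∀ G : Finset (Fin n × Fin 3), IsFacetOf n G ↔ ∃ k, F k = G) ∧
  ∀ i j : Fin t, i < j → ∃ k, k < j ∧ F i ∩ F j ⊆ F k ∩ F j ∧ (F j \ F k).card = 1

/-- The restriction number `r_j` of the `j`-th facet in a shelling: the number of
vertices `v ∈ F_j` such that `F_j \ {v}` is contained in some earlier facet `F_k`, `k < j`. -/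
noncomputable def restrNum {n t : ℕ} (F : Fin t → Finset (Fin n × Fin 3)) (j : Fin t) : ℕ :=
  Set.ncard {v : Fin n × Fin 3 | v ∈ F j ∧ ∃ k, k < j ∧ (F j).erase v ⊆ F k}

/-- The multiset `δ = {r₂, …, r_t}` of restriction numbers of a shelling,
omitting the first one. -/
noncomputable def restrMultiset {n t : ℕ} (F : Fin t → Finset (Fin n × Fin 3)) : Multiset ℕ :=
  ↑(List.ofFn (restrNum F)).tail

namespace Stmt7

/-- the `x`/`y` choice at position `i` encoded by bit `i` of `c`. -/
def bitf (c i : ℕ) : Fin 3 := if c.testBit i then 1 else 0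

lemma bitf_ne_two (c i : ℕ) : bitf c i ≠ 2 := by
  unfold bitf; split <;> decide

lemma bitf_eq_one_iff {c i : ℕ} : bitf c i = 1 ↔ c.testBit i := by
  unfold bitf; split <;> simp_all

lemma bitf_eq_zero_iff {c i : ℕ} : bitf c i = 0 ↔ ¬ c.testBit i := by
  unfold bitf; split <;> simp_all

/-- The facet of `Δₙ` with full position `m` and `x/y`-pattern `c` below `m`. -/
def Fac (n m c : ℕ) : Finset (Fin n × Fin 3) :=
  Finset.univ.filter fun v =>
    (v.1.val < m → (v.2 = 2 ∨ v.2 = bitf c v.1.val)) ∧ (m < v.1.val → v.2 ≠ 2)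

lemma mem_Fac {n m c : ℕ} {v : Fin n × Fin 3} :
    v ∈ Fac n m c ↔
      (v.1.val < m → (v.2 = 2 ∨ v.2 = bitf c v.1.val)) ∧ (m < v.1.val → v.2 ≠ 2) := by
  simp [Fac]

lemma mem_Fac' {n m c : ℕ} {i : Fin n} {t : Fin 3} :
    (i, t) ∈ Fac n m c ↔
      (i.val < m → (t = 2 ∨ t = bitf c i.val)) ∧ (m < i.val → t ≠ 2) :=
  mem_Fac

lemma z_mem_Fac {n m c : ℕ} {i : Fin n} : (i, (2 : Fin 3)) ∈ Fac n m c ↔ i.val ≤ m := by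
  rw [mem_Fac']
  constructor
  · rintro ⟨-, h2⟩
    by_contra h; exact (h2 (by omega)) rfl
  · intro h; exact ⟨fun _ => Or.inl rfl, fun h' => absurd h (by omega)⟩

lemma xy_mem_Fac_of_ge {n m c : ℕ} {i : Fin n} {t : Fin 3} (ht : t ≠ 2) (h : m ≤ i.val) :
    (i, t) ∈ Fac n m c := by
  rw [mem_Fac']
  exact ⟨fun h' => absurd h (by omega), fun _ => ht⟩

lemma bit_mem_Fac {n m c : ℕ} {i : Fin n} (h : i.val < m) :
    (i, bitf c i.val) ∈ Fac n m c := by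
  rw [mem_Fac']
  exact ⟨fun _ => Or.inr rfl, fun h' => absurd h (by omega)⟩

/-- `Fac n m c` is a face. -/
lemma isFaceOf_Fac (n m c : ℕ) : IsFaceOf n (Fac n m c) := by
  rintro ⟨i, j, hij, hx, hy, hz⟩
  rw [mem_Fac'] at hx hy hz
  have hi : ¬ i.val < m := by
    intro h
    rcases hx.1 h with h0 | h0
    · exact absurd h0 (by decide)
    · rcases hy.1 h with h1 | h1
      · exact absurd h1 (by decide)
      · rw [← h1] at h0; exact absurd h0 (by decide)
  have hj : ¬ m < j.val := fun h => (hz.2 h) rfl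
  have : (i : ℕ) < j := hij
  omega

/-- `Fac n m c` is a facet when `m < n`. -/
lemma isFacetOf_Fac {n m : ℕ} (c : ℕ) (hm : m < n) : IsFacetOf n (Fac n m c) := by
  refine ⟨isFaceOf_Fac n m c, fun G hG hsub => ?_⟩
  have hmz : ((⟨m, hm⟩ : Fin n), (2 : Fin 3)) ∈ G := hsub (z_mem_Fac.2 le_rfl)
  have hmx : ((⟨m, hm⟩ : Fin n), (0 : Fin 3)) ∈ G :=
    hsub (xy_mem_Fac_of_ge (by decide) le_rfl)
  have hmy : ((⟨m, hm⟩ : Fin n), (1 : Fin 3)) ∈ G :=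
    hsub (xy_mem_Fac_of_ge (by decide) le_rfl)
  apply Finset.Subset.antisymm hsub
  rintro ⟨i, t⟩ hv
  rw [mem_Fac']
  constructor
  · intro hilt
    by_contra hcon
    push_neg at hcon
    obtain ⟨ht2, htb⟩ := hcon
    -- t and bitf c i are the two distinct elements of {0,1}; so (i,0),(i,1) ∈ G
    have hb := hsub (bit_mem_Fac (c := c) hilt)
    have ht01 : t = 0 ∨ t = 1 := by
      fin_cases t
      · exact Or.inl rfl
      · exact Or.inr rfl
      · exact absurd rfl ht2
    have h0 : (i, (0 : Fin 3)) ∈ G ∧ (i, (1 : Fin 3)) ∈ G := by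
      by_cases hbit : c.testBit i.val
      · rw [bitf_eq_one_iff.2 hbit] at hb htb
        rcases ht01 with rfl | rfl
        · exact ⟨hv, hb⟩
        · exact absurd rfl htb
      · rw [bitf_eq_zero_iff.2 hbit] at hb htb
        rcases ht01 with rfl | rfl
        · exact absurd rfl htb
        · exact ⟨hb, hv⟩
    exact hG ⟨i, ⟨m, hm⟩, hilt, h0.1, h0.2, hmz⟩
  · intro hgt ht2
    subst ht2
    exact hG ⟨⟨m, hm⟩, i, hgt, hmx, hmy, hv⟩

end Stmt7

-- appended to s1
namespace Stmt7x
open Stmt7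

/-- bits of a sum of selected powers of two -/
lemma sum_pow_lt (m : ℕ) (p : ℕ → Prop) [DecidablePred p] :
    (∑ i ∈ Finset.range m, if p i then 2^i else 0) < 2^m := by
  induction m with
  | zero => simp
  | succ m ih =>
    rw [Finset.sum_range_succ]
    have : (if p m then 2^m else 0) ≤ 2^m := by split <;> simp
    have h2 : (2:ℕ)^(m+1) = 2^m + 2^m := by ring
    omega

lemma testBit_sum_pow (m : ℕ) (p : ℕ → Prop) [DecidablePred p] (j : ℕ) :
    (∑ i ∈ Finset.range m, if p i then 2^i else 0).testBit j
      = (decide (j < m) && decide (p j)) := by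
  induction m with
  | zero => simp
  | succ m ih =>
    rw [Finset.sum_range_succ]
    have hlt := sum_pow_lt m p
    by_cases hp : p m
    · rw [if_pos hp, Nat.add_comm, ]
      rcases lt_trichotomy j m with hj | rfl | hj
      · rw [Nat.testBit_two_pow_add_gt hj, ih]
        simp [hj, Nat.lt_succ_of_lt hj]
      · rw [Nat.testBit_two_pow_add_eq,
          Nat.testBit_lt_two_pow hlt]
        simp [hp, Nat.lt_succ_self]
      · rw [Nat.testBit_lt_two_pow (by
          have : (2:ℕ)^(m+1) ≤ 2^j := Nat.pow_le_pow_right (by norm_num) hj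
          omega)]
        simp [show ¬ j < m + 1 by omega]
    · rw [if_neg hp, Nat.add_zero, ih]
      rcases lt_trichotomy j m with hj | rfl | hj
      · simp [hj, Nat.lt_succ_of_lt hj]
      · simp [hp]
      · simp [show ¬ j < m by omega, show ¬ j < m + 1 by omega]

lemma fin3_cases (t : Fin 3) : t = 0 ∨ t = 1 ∨ t = 2 := by
  fin_cases t
  · exact Or.inl rfl
  · exact Or.inr (Or.inl rfl)
  · exact Or.inr (Or.inr rfl)

variable {n : ℕ} {G : Finset (Fin n × Fin 3)}

lemma not_face_insert (hG : IsFacetOf n G) {v : Fin n × Fin 3} (hv : v ∉ G) :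
    ¬ IsFaceOf n (insert v G) := by
  intro hface
  have := hG.2 (insert v G) hface (Finset.subset_insert v G)
  exact hv (this ▸ Finset.mem_insert_self v G)

lemma f2 (hG : IsFacetOf n G) (i : Fin n) :
    (i, (0:Fin 3)) ∈ G ∨ (i, (1:Fin 3)) ∈ G := by
  by_contra hcon
  push_neg at hcon
  apply not_face_insert hG hcon.1
  rintro ⟨a, b, hab, hx, hy, hz⟩
  rw [Finset.mem_insert, Prod.mk.injEq] at hx hy hz
  rcases hy with ⟨-, h⟩ | hy
  · exact absurd h (by decide)
  rcases hz with ⟨-, h⟩ | hz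
  · exact absurd h (by decide)
  rcases hx with ⟨rfl, -⟩ | hx
  · exact hcon.2 hy
  · exact hG.1 ⟨a, b, hab, hx, hy, hz⟩

lemma last_mem (hG : IsFacetOf n G) (hn : 0 < n) (t : Fin 3) (ht : t ≠ 2) :
    ((⟨n-1, by omega⟩ : Fin n), t) ∈ G := by
  by_contra hv
  apply not_face_insert hG hv
  rintro ⟨a, b, hab, hx, hy, hz⟩
  rw [Finset.mem_insert, Prod.mk.injEq] at hx hy hz
  rcases hz with ⟨-, h⟩ | hz
  · exact ht h.symm
  have hb : (b:ℕ) < n := b.2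
  have hab' : (a:ℕ) < (b:ℕ) := hab
  rcases hx with ⟨ha, -⟩ | hx
  · rw [ha] at hab'; simp at hab'; omega
  rcases hy with ⟨ha, -⟩ | hy
  · rw [ha] at hab'; simp at hab'; omega
  exact hG.1 ⟨a, b, hab, hx, hy, hz⟩

lemma facet_structure (hG : IsFacetOf n G) (hn : 0 < n) :
    ∃ m c, m < n ∧ c < 2^m ∧ G = Fac n m c := by
  classical
  -- the minimal index with both x and y present
  have hex : ∃ i : ℕ, ∃ h : i < n,
      ((⟨i,h⟩ : Fin n), (0:Fin 3)) ∈ G ∧ ((⟨i,h⟩ : Fin n), (1:Fin 3)) ∈ G :=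
    ⟨n-1, by omega, last_mem hG hn 0 (by decide), last_mem hG hn 1 (by decide)⟩
  set q : ℕ → Prop := fun i => ∃ h : i < n,
      ((⟨i,h⟩ : Fin n), (0:Fin 3)) ∈ G ∧ ((⟨i,h⟩ : Fin n), (1:Fin 3)) ∈ G with hq
  have hexq : ∃ i, q i := hex
  set m := Nat.find hexq with hmdef
  obtain ⟨hmn, hmx, hmy⟩ := Nat.find_spec hexq
  have hmin : ∀ i, i < m → ¬ q i := fun i hi => Nat.find_min hexq hi
  have hminF : ∀ i : Fin n, (i:ℕ) < m → ¬ ((i, (0:Fin 3)) ∈ G ∧ (i, (1:Fin 3)) ∈ G) := by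
    intro i hi hcon
    exact hmin i hi ⟨i.2, by simpa using hcon.1, by simpa using hcon.2⟩
  -- f1 : all z's up to m present
  have f1 : ∀ i : Fin n, (i:ℕ) ≤ m → (i, (2:Fin 3)) ∈ G := by
    intro i hi
    by_contra hv
    apply not_face_insert hG hv
    rintro ⟨a, b, hab, hx, hy, hz⟩
    rw [Finset.mem_insert, Prod.mk.injEq] at hx hy hz
    rcases hx with ⟨-, h⟩ | hx
    · exact absurd h (by decide)
    rcases hy with ⟨-, h⟩ | hy
    · exact absurd h (by decide)
    rcases hz with ⟨hbi, -⟩ | hz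
    · rw [hbi] at hab
      have : (a:ℕ) < (i:ℕ) := hab
      exact hminF a (by omega) ⟨hx, hy⟩
    · exact hG.1 ⟨a, b, hab, hx, hy, hz⟩
  -- f3 : no z beyond m
  have f3 : ∀ i : Fin n, m < (i:ℕ) → (i, (2:Fin 3)) ∉ G := by
    intro i hi hz
    exact hG.1 ⟨⟨m, hmn⟩, i, hi, hmx, hmy, hz⟩
  -- f4 : both x.y beyond m
  have f4 : ∀ i : Fin n, m < (i:ℕ) → ∀ t : Fin 3, t ≠ 2 → (i, t) ∈ G := by
    intro i hi t ht
    by_contra hv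
    apply not_face_insert hG hv
    rintro ⟨a, b, hab, hx, hy, hz⟩
    rw [Finset.mem_insert, Prod.mk.injEq] at hx hy hz
    rcases hz with ⟨-, h⟩ | hz
    · exact ht h.symm
    have hbm : (b:ℕ) ≤ m := by
      by_contra hb
      exact f3 b (by omega) hz
    have hab' : (a:ℕ) < (b:ℕ) := hab
    rcases hx with ⟨hai, -⟩ | hx
    · have : (a:ℕ) = (i:ℕ) := by rw [hai]
      omega
    rcases hy with ⟨hai, -⟩ | hy
    · have : (a:ℕ) = (i:ℕ) := by rw [hai]
      omega
    exact hG.1 ⟨a, b, hab, hx, hy, hz⟩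
  -- the bit pattern
  set p : ℕ → Prop := fun i => ∃ h : i < n, ((⟨i,h⟩ : Fin n), (1:Fin 3)) ∈ G with hp
  have : DecidablePred p := fun i => by unfold p; infer_instance
  set c := ∑ i ∈ Finset.range m, if p i then 2^i else 0 with hc
  have hclt : c < 2^m := sum_pow_lt m p
  have hcbit : ∀ j, c.testBit j = (decide (j < m) && decide (p j)) :=
    testBit_sum_pow m p
  refine ⟨m, c, hmn, hclt, ?_⟩
  ext ⟨i, t⟩
  rw [mem_Fac']
  constructor
  · intro hv
    constructor
    · intro hilt
      by_cases hb : c.testBit (i:ℕ)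
      · have h1G : (i, (1:Fin 3)) ∈ G := by
          rw [hcbit] at hb
          simp only [Bool.and_eq_true, decide_eq_true_eq] at hb
          obtain ⟨-, hw, hmem⟩ := hb
          simpa using hmem
        rw [bitf_eq_one_iff.2 hb]
        rcases fin3_cases t with rfl | rfl | rfl
        · exact absurd ⟨hv, h1G⟩ (hminF i hilt)
        · exact Or.inr rfl
        · exact Or.inl rfl
      · rw [bitf_eq_zero_iff.2 hb]
        rcases fin3_cases t with rfl | rfl | rfl
        · exact Or.inr rfl
        · exfalso
          apply hb
          rw [hcbit]
          simp only [Bool.and_eq_true, decide_eq_true_eq]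
          exact ⟨hilt, i.2, by simpa using hv⟩
        · exact Or.inl rfl
    · intro hgt ht2
      subst ht2
      exact f3 i hgt hv
  · rintro ⟨h1, h2⟩
    rcases lt_trichotomy (i:ℕ) m with hi | hi | hi
    · rcases h1 hi with rfl | rfl
      · exact f1 i (by omega)
      · by_cases hb : c.testBit (i:ℕ)
        · rw [bitf_eq_one_iff.2 hb]
          rw [hcbit] at hb
          simp only [Bool.and_eq_true, decide_eq_true_eq] at hb
          obtain ⟨-, h, hmem⟩ := hb
          simpa using hmem
        · rw [bitf_eq_zero_iff.2 hb]
          rcases f2 hG i with h | h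
          · exact h
          · exfalso
            rw [hcbit] at hb
            simp only [Bool.and_eq_true, decide_eq_true_eq, not_and] at hb
            exact hb hi ⟨i.2, by simpa using h⟩
    · have him : i = ⟨m, hmn⟩ := by ext; exact hi
      rcases fin3_cases t with rfl | rfl | rfl
      · rw [him]; exact hmx
      · rw [him]; exact hmy
      · exact f1 i (by omega)
    · have ht2 : t ≠ 2 := h2 hi
      exact f4 i hi t ht2

/-- injectivity of the parametrization -/
lemma Fac_inj {m c m' c' : ℕ} (hm : m < n) (hc : c < 2^m) (hm' : m' < n) (hc' : c' < 2^m')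
    (h : Fac n m c = Fac n m' c') : m = m' ∧ c = c' := by
  have key : ∀ {a b : ℕ} (ha : a < n) {d e : ℕ},
      Fac n a d = Fac n b e → a ≤ b := by
    intro a b ha d e hF
    have hx : ((⟨a, ha⟩ : Fin n), (2:Fin 3)) ∈ Fac n a d := z_mem_Fac.2 le_rfl
    rw [hF, z_mem_Fac] at hx
    exact hx
  have hmm : m = m' := le_antisymm (key hm h) (key hm' h.symm)
  subst hmm
  refine ⟨rfl, Nat.eq_of_testBit_eq fun i => ?_⟩
  by_cases hi : i < m
  · have := bit_mem_Fac (n := n) (c := c) (i := ⟨i, by omega⟩) (m := m) hi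
    rw [h, mem_Fac'] at this
    rcases this.1 hi with hh | hh
    · exact absurd hh (bitf_ne_two c i)
    · by_cases h1 : c.testBit i <;> by_cases h2 : c'.testBit i <;> simp [h1, h2]
      · rw [bitf_eq_one_iff.2 h1, bitf_eq_zero_iff.2 h2] at hh
        exact absurd hh (by decide)
      · rw [bitf_eq_zero_iff.2 h1, bitf_eq_one_iff.2 h2] at hh
        exact absurd hh (by decide)
  · rw [Nat.testBit_lt_two_pow, Nat.testBit_lt_two_pow]
    · calc c' < 2^m := hc'
        _ ≤ 2^i := Nat.pow_le_pow_right (by norm_num) (by omega)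
    · calc c < 2^m := hc
        _ ≤ 2^i := Nat.pow_le_pow_right (by norm_num) (by omega)

end Stmt7x

namespace Stmt7y
open Stmt7 Stmt7x

/-- the enumeration of the facets of `Δₙ`: facet `j` corresponds to
`(m, c)` with `j + 1 = 2 ^ m + c`, `c < 2 ^ m`. -/
noncomputable def enum (n : ℕ) : Fin (2^n - 1) → Finset (Fin n × Fin 3) :=
  fun j => Fac n (Nat.log2 (j.val+1)) ((j.val+1) - 2^(Nat.log2 (j.val+1)))

lemma enum_def {n : ℕ} (j : Fin (2^n - 1)) :
    enum n j = Fac n (Nat.log2 (j.val+1)) ((j.val+1) - 2^(Nat.log2 (j.val+1))) := rfl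

lemma decode_le {k : ℕ} (hk : 1 ≤ k) : 2^(Nat.log2 k) ≤ k :=
  (Nat.le_log2 (by omega)).1 le_rfl

lemma decode_lt {k : ℕ} (hk : 1 ≤ k) : k < 2^(Nat.log2 k + 1) :=
  (Nat.log2_lt (by omega)).1 (Nat.lt_succ_self _)

lemma log2_two_pow_add {m γ : ℕ} (hγ : γ < 2^m) : Nat.log2 (2^m + γ) = m := by
  have h1 : m ≤ Nat.log2 (2^m + γ) :=
    (Nat.le_log2 (by positivity)).2 (Nat.le_add_right _ _)
  have h2 : Nat.log2 (2^m + γ) < m + 1 :=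
    (Nat.log2_lt (by positivity)).2 (by
      have : (2:ℕ)^(m+1) = 2^m + 2^m := by ring
      omega)
  omega

/-- encoding: the facet `Fac n m γ` occurs at index `2 ^ m + γ - 1`. -/
lemma enum_encode (n m γ : ℕ) (hγ : γ < 2^m) (h : 2^m + γ - 1 < 2^n - 1) :
    enum n ⟨2^m + γ - 1, h⟩ = Fac n m γ := by
  have hpos : 1 ≤ 2^m := Nat.one_le_two_pow
  have hk : 2^m + γ - 1 + 1 = 2^m + γ := by omega
  unfold enum
  simp only [hk, log2_two_pow_add hγ, Nat.add_sub_cancel_left]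

lemma idx_lt {n : ℕ} (j : Fin (2^n - 1)) : Nat.log2 (j.val+1) < n := by
  have h1 : j.val + 1 < 2^n := by have := j.2; omega
  exact (Nat.log2_lt (by omega)).2 h1

lemma cidx_lt {n : ℕ} (j : Fin (2^n - 1)) :
    (j.val+1) - 2^(Nat.log2 (j.val+1)) < 2^(Nat.log2 (j.val+1)) := by
  have h1 := decode_le (k := j.val+1) (by omega)
  have h2 := decode_lt (k := j.val+1) (by omega)
  have : (2:ℕ)^(Nat.log2 (j.val+1) + 1) = 2^(Nat.log2 (j.val+1)) + 2^(Nat.log2 (j.val+1)) := by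
    ring
  omega

/-- lexicographically smaller parameter pairs give a smaller code. -/
lemma enc_lt_of_lex {μ γ m c : ℕ} (hγ : γ < 2^μ) (hlex : μ < m ∨ (μ = m ∧ γ < c)) :
    2^μ + γ < 2^m + c := by
  rcases hlex with h | ⟨rfl, h⟩
  · have h1 : (2:ℕ)^(μ+1) ≤ 2^m := Nat.pow_le_pow_right (by norm_num) h
    have h2 : (2:ℕ)^(μ+1) = 2^μ + 2^μ := by ring
    omega
  · omega

/-- earlier indices have lexicographically smaller parameter pairs. -/
lemma lex_of_idx_lt {n : ℕ} {i j : Fin (2^n - 1)} (hij : i < j) :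
    Nat.log2 (i.val+1) < Nat.log2 (j.val+1) ∨
      (Nat.log2 (i.val+1) = Nat.log2 (j.val+1) ∧
        (i.val+1) - 2^(Nat.log2 (i.val+1)) < (j.val+1) - 2^(Nat.log2 (j.val+1))) := by
  set a := Nat.log2 (i.val+1) with ha
  set b := Nat.log2 (j.val+1) with hb
  have hi1 : 2^a ≤ i.val+1 := decode_le (by omega)
  have hi2 : i.val+1 < 2^(a+1) := decode_lt (by omega)
  have hj1 : 2^b ≤ j.val+1 := decode_le (by omega)
  have hj2 : j.val+1 < 2^(b+1) := decode_lt (by omega)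
  have hij' : (i:ℕ) < (j:ℕ) := hij
  rcases lt_trichotomy a b with h | h | h
  · exact Or.inl h
  · right
    refine ⟨h, ?_⟩
    have h2 : (2:ℕ)^a = 2^b := by rw [h]
    omega
  · exfalso
    have h2 : (2:ℕ)^(b+1) ≤ 2^a := Nat.pow_le_pow_right (by norm_num) (by omega)
    have h3 : (2:ℕ)^(b+1) = 2^b + 2^b := by ring
    omega

lemma mem_Fac_z {n m c : ℕ} {p : Fin n} : (p, (2:Fin 3)) ∈ Fac n m c ↔ (p:ℕ) ≤ m :=
  z_mem_Fac

/-- The per-position membership condition only depends on the relevant bit. -/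
lemma mem_Fac_congr {n m c c' : ℕ} {p : Fin n} {t : Fin 3}
    (hbit : (p:ℕ) < m → c.testBit (p:ℕ) = c'.testBit (p:ℕ)) :
    ((p, t) ∈ Fac n m c ↔ (p, t) ∈ Fac n m c') := by
  rw [mem_Fac', mem_Fac']
  have : (p:ℕ) < m → bitf c (p:ℕ) = bitf c' (p:ℕ)  := by
    intro h; unfold bitf; rw [hbit h]
  constructor
  · rintro ⟨h1, h2⟩
    exact ⟨fun hp => by rw [← this hp]; exact h1 hp, h2⟩
  · rintro ⟨h1, h2⟩
    exact ⟨fun hp => by rw [this hp]; exact h1 hp, h2⟩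

/-! ### the two shelling steps, as pure statements about the facets -/

lemma sub_low {n m c mi ci : ℕ} (hmi : mi < m) :
    Fac n mi ci ∩ Fac n m c ⊆ Fac n (m-1) (c % 2^(m-1)) ∩ Fac n m c := by
  rintro ⟨p, t⟩ hv
  rw [Finset.mem_inter] at hv ⊢
  obtain ⟨hvi, hvj⟩ := hv
  refine ⟨?_, hvj⟩
  rw [mem_Fac'] at hvi hvj ⊢
  constructor
  · intro hp
    rcases hvj.1 (by omega) with h | h
    · exact Or.inl h
    · right
      rw [h]
      unfold bitf
      rw [Nat.testBit_mod_two_pow]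
      simp [hp]
  · intro hp ht2
    subst ht2
    by_cases hpm : m < (p:ℕ)
    · exact hvj.2 hpm rfl
    · exact hvi.2 (by omega) rfl

lemma sdiff_low {n m c : ℕ} (hmn : m < n) (hm1 : 1 ≤ m) :
    Fac n m c \ Fac n (m-1) (c % 2^(m-1)) = {((⟨m, hmn⟩ : Fin n), (2:Fin 3))} := by
  ext ⟨p, t⟩
  rw [Finset.mem_sdiff, Finset.mem_singleton, Prod.mk.injEq]
  constructor
  · rintro ⟨hvj, hvk⟩
    rw [mem_Fac'] at hvj
    by_cases hpm : (p:ℕ) < m - 1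
    · exfalso
      apply hvk
      rw [mem_Fac']
      constructor
      · intro hp
        rcases hvj.1 (by omega) with h | h
        · exact Or.inl h
        · right
          rw [h]; unfold bitf; rw [Nat.testBit_mod_two_pow]; simp [hpm]
      · intro hp; omega
    by_cases hpm2 : (p:ℕ) = m - 1
    · exfalso
      apply hvk
      rw [mem_Fac']
      exact ⟨fun h => by omega, fun h => by omega⟩
    by_cases hpm3 : (p:ℕ) = m
    · have ht2 : t = 2 := by
        by_contra ht
        exact hvk (xy_mem_Fac_of_ge ht (by omega))
      exact ⟨by ext; exact hpm3, ht2⟩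
    · exfalso
      have hpgt : m < (p:ℕ) := by omega
      exact hvk (xy_mem_Fac_of_ge (hvj.2 hpgt) (by omega))
  · rintro ⟨rfl, rfl⟩
    constructor
    · rw [mem_Fac_z]
    · rw [mem_Fac_z]
      have h9 : ¬ (m ≤ m - 1) := by omega
      exact fun h => h9 h

lemma sub_flip {n m c ci i0 : ℕ} (hi0 : i0 < m) (hb1 : c.testBit i0 = true)
    (hb2 : ci.testBit i0 = false) :
    Fac n m ci ∩ Fac n m c ⊆ Fac n m (c ^^^ 2^i0) ∩ Fac n m c := by
  have hγbit : ∀ p, (c ^^^ 2^i0).testBit p = if p = i0 then false else c.testBit p := by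
    intro p
    rw [Nat.testBit_xor]
    by_cases hp : p = i0
    · subst hp; rw [Nat.testBit_two_pow_self, hb1]; simp
    · rw [Nat.testBit_two_pow_of_ne (fun h => hp h.symm)]
      simp [hp]
  rintro ⟨p, t⟩ hv
  rw [Finset.mem_inter] at hv ⊢
  obtain ⟨hvi, hvj⟩ := hv
  refine ⟨?_, hvj⟩
  by_cases hp : (p:ℕ) = i0
  · have ht2 : t = 2 := by
      rw [mem_Fac'] at hvi hvj
      rcases hvj.1 (by omega) with h | h
      · exact h
      rcases hvi.1 (by omega) with h' | h'
      · exact h'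
      exfalso
      rw [h'] at h
      rw [hp] at h
      rw [bitf_eq_zero_iff.2 (by simp [hb2])] at h
      rw [bitf_eq_one_iff.2 hb1] at h
      exact absurd h (by decide)
    subst ht2
    rw [mem_Fac_z]
    rw [mem_Fac_z] at hvj
    exact hvj
  · rw [← mem_Fac_congr (c := c)]
    · exact hvj
    · intro h
      rw [hγbit]
      simp [hp]

lemma sdiff_flip {n m c i0 : ℕ} (hmn : m < n) (hi0 : i0 < m) (hb1 : c.testBit i0 = true) :
    Fac n m c \ Fac n m (c ^^^ 2^i0) = {((⟨i0, by omega⟩ : Fin n), (1:Fin 3))} := by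
  have hγbit : ∀ p, (c ^^^ 2^i0).testBit p = if p = i0 then false else c.testBit p := by
    intro p
    rw [Nat.testBit_xor]
    by_cases hp : p = i0
    · subst hp; rw [Nat.testBit_two_pow_self, hb1]; simp
    · rw [Nat.testBit_two_pow_of_ne (fun h => hp h.symm)]
      simp [hp]
  ext ⟨p, t⟩
  rw [Finset.mem_sdiff, Finset.mem_singleton, Prod.mk.injEq]
  constructor
  · rintro ⟨hvj, hvk⟩
    by_cases hp : (p:ℕ) = i0
    · refine ⟨by ext; exact hp, ?_⟩
      by_contra ht
      apply hvk
      rcases fin3_cases t with rfl | rfl | rfl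
      · exfalso
        rw [mem_Fac'] at hvj
        rcases hvj.1 (by omega) with h | h
        · exact absurd h (by decide)
        · rw [hp, bitf_eq_one_iff.2 hb1] at h
          exact absurd h (by decide)
      · exact absurd rfl ht
      · rw [mem_Fac_z]; omega
    · exfalso
      apply hvk
      rw [← mem_Fac_congr (c := c)]
      · exact hvj
      · intro h
        rw [hγbit]
        simp [hp]
  · rintro ⟨rfl, rfl⟩
    constructor
    · have h1 : bitf c i0 = 1 := bitf_eq_one_iff.2 hb1
      have hmem := bit_mem_Fac (n := n) (c := c) (i := ⟨i0, by omega⟩) (m := m) hi0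
      rw [h1] at hmem
      exact hmem
    · rw [mem_Fac']
      rintro ⟨h1, -⟩
      rcases h1 hi0 with h | h
      · exact absurd h (by decide)
      · rw [bitf_eq_zero_iff.2 (by rw [hγbit]; simp)] at h
        exact absurd h (by decide)

theorem shelling_enum (n : ℕ) (hn : 1 ≤ n) : IsShelling n (2^n - 1) (enum n) := by
  classical
  have hmlt : ∀ j : Fin (2^n-1), Nat.log2 (j.val+1) < n := idx_lt
  have hclt : ∀ j : Fin (2^n-1), (j.val+1) - 2^(Nat.log2 (j.val+1)) < 2^(Nat.log2 (j.val+1)) :=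
    cidx_lt
  refine ⟨?_, ?_, ?_⟩
  · -- injectivity
    intro i j hij
    obtain ⟨hm, hc⟩ := Fac_inj (hmlt i) (hclt i) (hmlt j) (hclt j) hij
    have hi := decode_le (k := i.val+1) (by omega)
    have hj := decode_le (k := j.val+1) (by omega)
    have h2 : (2:ℕ)^(Nat.log2 (i.val+1)) = 2^(Nat.log2 (j.val+1)) := by rw [hm]
    ext
    omega
  · -- facet characterization
    intro G
    constructor
    · intro hG
      obtain ⟨m, c, hm, hc, rfl⟩ := facet_structure hG (by omega)
      have hpos : 1 ≤ 2^m := Nat.one_le_two_pow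
      have hlt : 2^m + c - 1 < 2^n - 1 := by
        have h1 : 2^m + c < 2^(m+1) := by
          have : (2:ℕ)^(m+1) = 2^m + 2^m := by ring
          omega
        have h2 : (2:ℕ)^(m+1) ≤ 2^n := Nat.pow_le_pow_right (by norm_num) (by omega)
        omega
      exact ⟨⟨2^m + c - 1, hlt⟩, enum_encode n m c hc hlt⟩
    · rintro ⟨k, rfl⟩
      exact isFacetOf_Fac _ (hmlt k)
  · -- shelling condition
    intro i j hij
    have hEj := enum_def j
    have hEi := enum_def i
    have hdj : 2^(Nat.log2 (j.val+1)) ≤ j.val+1 := decode_le (by omega)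
    have hlex := lex_of_idx_lt hij
    have hmltj := hmlt j
    have hcltj := hclt j
    have hmlti := hmlt i
    have hj2 := j.2
    rcases hlex with hlex | ⟨hmm, hcc⟩
    · -- case mi < m
      set m := Nat.log2 (j.val+1) with hm
      set c := (j.val+1) - 2^m with hc
      have hm1 : 1 ≤ m := by omega
      have hγlt : c % 2^(m-1) < 2^(m-1) := Nat.mod_lt _ (by positivity)
      have henc : 2^(m-1) + c % 2^(m-1) < 2^m + c := enc_lt_of_lex hγlt (Or.inl (by omega))
      have hkj : 2^(m-1) + c % 2^(m-1) - 1 < j.val := by omega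
      have hkn : 2^(m-1) + c % 2^(m-1) - 1 < 2^n - 1 := by omega
      refine ⟨⟨2^(m-1) + c % 2^(m-1) - 1, hkn⟩, hkj, ?_, ?_⟩
      · rw [enum_encode n (m-1) _ hγlt, hEj, hEi]
        exact sub_low hlex
      · rw [enum_encode n (m-1) _ hγlt, hEj]
        rw [sdiff_low hmltj hm1, Finset.card_singleton]
    · -- case mi = m : flip a bit
      set m := Nat.log2 (j.val+1) with hm
      set c := (j.val+1) - 2^m with hc
      set ci := (i.val+1) - 2^(Nat.log2 (i.val+1)) with hci
      have hbit : ∃ i0, c.testBit i0 = true ∧ ci.testBit i0 = false := by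
        by_contra hcon
        push_neg at hcon
        have hle : c ≤ ci := Nat.le_of_testBit (fun i0 h => by
          have h2 := hcon i0 h
          simpa using h2)
        omega
      obtain ⟨i0, hb1, hb2⟩ := hbit
      have hi0m : i0 < m := by
        have h1 : 2^i0 ≤ c := Nat.ge_two_pow_of_testBit hb1
        have h3 : (2:ℕ)^i0 < 2^m := by omega
        exact (Nat.pow_lt_pow_iff_right (a := 2) (by norm_num)).1 h3
      have hγlt : c ^^^ 2^i0 < 2^m :=
        Nat.xor_lt_two_pow hcltj (Nat.pow_lt_pow_right (by norm_num) hi0m)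
      have hγc : c ^^^ 2^i0 < c := by
        apply Nat.lt_of_testBit i0
        · rw [Nat.testBit_xor, Nat.testBit_two_pow_self, hb1]; rfl
        · exact hb1
        · intro p hp
          rw [Nat.testBit_xor, Nat.testBit_two_pow_of_ne (by omega)]
          simp
      have hkj : 2^m + (c ^^^ 2^i0) - 1 < j.val := by omega
      have hkn : 2^m + (c ^^^ 2^i0) - 1 < 2^n - 1 := by omega
      refine ⟨⟨2^m + (c ^^^ 2^i0) - 1, hkn⟩, hkj, ?_, ?_⟩
      · rw [enum_encode n m _ hγlt, hEj, hEi, hmm]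
        exact sub_flip hi0m hb1 hb2
      · rw [enum_encode n m _ hγlt, hEj]
        rw [sdiff_flip hmltj hi0m hb1, Finset.card_singleton]

end Stmt7y

namespace Stmt7z
open Stmt7 Stmt7x Stmt7y

/-- popcount -/
def pc (k : ℕ) : ℕ := ((Finset.range k).filter (fun p => k.testBit p = true)).card

lemma pc_congr {K k : ℕ} (h : k < 2^K) :
    ((Finset.range K).filter (fun p => k.testBit p = true)).card = pc k := by
  unfold pc
  congr 1
  ext p
  simp only [Finset.mem_filter, Finset.mem_range]
  constructor
  · rintro ⟨-, hb⟩
    have h1 : 2^p ≤ k := Nat.ge_two_pow_of_testBit hb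
    have h2 : p < 2^p := Nat.lt_two_pow_self (n := p)
    exact ⟨by omega, hb⟩
  · rintro ⟨-, hb⟩
    have h1 : 2^p ≤ k := Nat.ge_two_pow_of_testBit hb
    have h3 : (2:ℕ)^p < 2^K := by omega
    exact ⟨(Nat.pow_lt_pow_iff_right (a := 2) (by norm_num)).1 h3, hb⟩

lemma pc_two_pow_add {m c : ℕ} (hc : c < 2^m) : pc (2^m + c) = pc c + 1 := by
  have h1 : 2^m + c < 2^(m+1) := by
    have : (2:ℕ)^(m+1) = 2^m + 2^m := by ring
    omega
  rw [← pc_congr h1, ← pc_congr hc]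
  have hins : (Finset.range (m+1)).filter (fun p => (2^m + c).testBit p = true)
      = insert m ((Finset.range m).filter (fun p => c.testBit p = true)) := by
    ext p
    simp only [Finset.mem_filter, Finset.mem_range, Finset.mem_insert]
    constructor
    · rintro ⟨hp, hb⟩
      rcases lt_trichotomy p m with h | rfl | h
      · rw [Nat.testBit_two_pow_add_gt h] at hb
        exact Or.inr ⟨h, hb⟩
      · exact Or.inl rfl
      · omega
    · rintro (rfl | ⟨hp, hb⟩)
      · rw [Nat.testBit_two_pow_add_eq, Nat.testBit_lt_two_pow hc]
        exact ⟨by omega, rfl⟩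
      · rw [Nat.testBit_two_pow_add_gt hp]
        exact ⟨by omega, hb⟩
  rw [hins, Finset.card_insert_of_notMem (by
    simp only [Finset.mem_filter, Finset.mem_range]
    rintro ⟨h, -⟩
    omega)]

lemma erase_subset_of_sdiff_eq {α : Type*} [DecidableEq α] {s t : Finset α} {v : α}
    (h : s \ t = {v}) : s.erase v ⊆ t := by
  intro x hx
  rw [Finset.mem_erase] at hx
  by_contra hxt
  have : x ∈ s \ t := Finset.mem_sdiff.2 ⟨hx.2, hxt⟩
  rw [h, Finset.mem_singleton] at this
  exact hx.1 this

/-- classification of the vertices `v` of a facet whose erasure is contained in an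
earlier facet. -/
lemma erase_sub_classify {n m c μ γ : ℕ} (hmn : m < n) (hc : c < 2^m)
    (hμ : μ < n) (hγ : γ < 2^μ) (hlex : μ < m ∨ (μ = m ∧ γ < c)) {v : Fin n × Fin 3}
    (hsub : (Fac n m c).erase v ⊆ Fac n μ γ) :
    v = ((⟨m, hmn⟩ : Fin n), (2:Fin 3)) ∨
      ((v.1:ℕ) < m ∧ v.2 = 1 ∧ c.testBit (v.1:ℕ) = true) := by
  have hmem : ∀ w ∈ Fac n m c, w ≠ v → w ∈ Fac n μ γ := by
    intro w hw hne
    exact hsub (Finset.mem_erase.2 ⟨hne, hw⟩)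
  rcases hlex with hlt | ⟨heq, hγc⟩
  · -- μ < m : forced v = (m, 2)
    left
    by_contra hne
    have hz : ((⟨m, hmn⟩ : Fin n), (2:Fin 3)) ∈ Fac n m c := z_mem_Fac.2 le_rfl
    have h8 := hmem _ hz (fun h => hne h.symm)
    rw [z_mem_Fac] at h8
    have h9 : m ≤ μ := h8
    omega
  · -- μ = m, γ < c : v is a `1` at a set bit of `c`
    rw [heq] at hγ hmem
    have hbits : ∀ p (hp : p < m), v ≠ ((⟨p, by omega⟩ : Fin n), bitf c p) →
        γ.testBit p = c.testBit p := by
      intro p hp hne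
      have hw : ((⟨p, by omega⟩ : Fin n), bitf c p) ∈ Fac n m c := bit_mem_Fac hp
      have hmem' := hmem _ hw (fun h => hne h.symm)
      rw [mem_Fac'] at hmem'
      rcases hmem'.1 hp with h | h
      · exact absurd h (bitf_ne_two c p)
      · by_cases hb : c.testBit p
        · have h1 : bitf γ p = 1 := by rw [← h, bitf_eq_one_iff.2 hb]
          rw [bitf_eq_one_iff] at h1
          rw [h1, hb]
        · have h1 : ¬ γ.testBit p := by
            rw [← bitf_eq_zero_iff, ← h, bitf_eq_zero_iff.2 hb]
          have e1 : γ.testBit p = false := by simpa using h1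
          have e2 : c.testBit p = false := by simpa using hb
          rw [e1, e2]
    -- find position where they differ
    have hne : ∃ p, p < m ∧ γ.testBit p ≠ c.testBit p := by
      by_contra hcon
      push_neg at hcon
      have : γ = c := Nat.eq_of_testBit_eq (fun p => by
        by_cases hp : p < m
        · exact hcon p hp
        · rw [Nat.testBit_lt_two_pow, Nat.testBit_lt_two_pow]
          · calc c < 2^m := hc
              _ ≤ 2^p := Nat.pow_le_pow_right (by norm_num) (by omega)
          · calc γ < 2^m := hγ
              _ ≤ 2^p := Nat.pow_le_pow_right (by norm_num) (by omega))
      omega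
    obtain ⟨p0, hp0, hdiff⟩ := hne
    have hv : v = ((⟨p0, by omega⟩ : Fin n), bitf c p0) := by
      by_contra h
      exact hdiff (hbits p0 hp0 h)
    -- all other positions agree
    have hagree : ∀ p, p ≠ p0 → γ.testBit p = c.testBit p := by
      intro p hp
      by_cases hpm : p < m
      · refine hbits p hpm (fun h => ?_)
        rw [hv] at h
        have : p0 = p := by
          have := congrArg (fun w => (w.1 : ℕ)) h
          simpa using this
        omega
      · rw [Nat.testBit_lt_two_pow, Nat.testBit_lt_two_pow]
        · calc c < 2^m := hc
            _ ≤ 2^p := Nat.pow_le_pow_right (by norm_num) (by omega)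
        · calc γ < 2^m := hγ
            _ ≤ 2^p := Nat.pow_le_pow_right (by norm_num) (by omega)
    -- the bit of `c` at `p0` must be set, else `c < γ`
    have hb : c.testBit p0 = true := by
      by_contra hbf
      rw [Bool.not_eq_true] at hbf
      have hbg : γ.testBit p0 = true := by
        rcases Bool.eq_false_or_eq_true (γ.testBit p0) with h | h
        · exact h
        · exact absurd (h.trans hbf.symm) hdiff
      have : c < γ := Nat.lt_of_testBit p0 hbf hbg
        (fun p hp => (hagree p (by omega)).symm)
      omega
    right
    rw [hv]
    exact ⟨hp0, by rw [bitf_eq_one_iff.2 hb], hb⟩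

/-- the restriction number of facet `j ≥ 1` in the shelling is `pc (j+1)`. -/
lemma restrNum_enum (n : ℕ) (j : Fin (2^n - 1)) (hj : 1 ≤ j.val) :
    restrNum (enum n) j = pc (j.val + 1) := by
  classical
  have hmn : Nat.log2 (j.val+1) < n := idx_lt j
  have hcj : (j.val+1) - 2^(Nat.log2 (j.val+1)) < 2^(Nat.log2 (j.val+1)) := cidx_lt j
  have hdj : 2^(Nat.log2 (j.val+1)) ≤ j.val+1 := decode_le (by omega)
  have hm1 : 1 ≤ Nat.log2 (j.val+1) := (Nat.le_log2 (by omega)).2 (by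
    have : (2:ℕ)^1 = 2 := by norm_num
    omega)
  set m := Nat.log2 (j.val+1) with hm
  set c := (j.val+1) - 2^m with hc
  have hEj : enum n j = Fac n m c := enum_def j
  -- the restriction set
  set R : Finset (Fin n × Fin 3) :=
    insert ((⟨m, hmn⟩ : Fin n), (2:Fin 3))
      (Finset.univ.filter fun v : Fin n × Fin 3 =>
        (v.1:ℕ) < m ∧ v.2 = 1 ∧ c.testBit (v.1:ℕ) = true) with hR
  have hseteq : {v : Fin n × Fin 3 | v ∈ enum n j ∧ ∃ k, k < j ∧ (enum n j).erase v ⊆ enum n k}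
      = ↑R := by
    ext v
    simp only [Set.mem_setOf_eq, Finset.coe_insert, Set.mem_insert_iff, Finset.coe_filter,
      Finset.mem_univ, true_and, hR]
    constructor
    · rintro ⟨hvF, k, hkj, hsub⟩
      have hEk : enum n k = Fac n (Nat.log2 (k.val+1)) ((k.val+1) - 2^(Nat.log2 (k.val+1))) :=
        enum_def k
      have hlex := lex_of_idx_lt hkj
      rw [hEj] at hsub
      rw [hEk] at hsub
      have := erase_sub_classify hmn hcj (idx_lt k) (cidx_lt k)
        (by rcases lex_of_idx_lt hkj with h | ⟨h1, h2⟩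
            · exact Or.inl h
            · exact Or.inr ⟨h1, h2⟩) hsub
      rcases this with h | h
      · exact Or.inl h
      · right
        simpa using h
    · rintro (rfl | hv)
      · refine ⟨by rw [hEj, mem_Fac_z], ?_⟩
        -- witness : Fac n (m-1) (c % 2^(m-1))
        have hγlt : c % 2^(m-1) < 2^(m-1) := Nat.mod_lt _ (by positivity)
        have henc : 2^(m-1) + c % 2^(m-1) < 2^m + c := enc_lt_of_lex hγlt (Or.inl (by omega))
        have hj2 := j.2
        have hkj : 2^(m-1) + c % 2^(m-1) - 1 < j.val := by omega
        have hkn : 2^(m-1) + c % 2^(m-1) - 1 < 2^n - 1 := by omega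
        refine ⟨⟨2^(m-1) + c % 2^(m-1) - 1, hkn⟩, hkj, ?_⟩
        rw [hEj, enum_encode n (m-1) _ hγlt]
        exact erase_subset_of_sdiff_eq (sdiff_low hmn hm1)
      · obtain ⟨hv1, hv2, hv3⟩ := hv
        have hvF : v ∈ Fac n m c := by
          have := bit_mem_Fac (n := n) (c := c) (i := v.1) (m := m) hv1
          rwa [bitf_eq_one_iff.2 hv3, ← hv2, Prod.mk.eta] at this
        refine ⟨by rw [hEj]; exact hvF, ?_⟩
        -- witness : flip bit v.1
        set i0 := (v.1 : ℕ) with hi0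
        have hγlt : c ^^^ 2^i0 < 2^m :=
          Nat.xor_lt_two_pow hcj (Nat.pow_lt_pow_right (by norm_num) hv1)
        have hγc : c ^^^ 2^i0 < c := by
          apply Nat.lt_of_testBit i0
          · rw [Nat.testBit_xor, Nat.testBit_two_pow_self, hv3]; rfl
          · exact hv3
          · intro p hp
            rw [Nat.testBit_xor, Nat.testBit_two_pow_of_ne (by omega)]
            simp
        have hj2 := j.2
        have hkj : 2^m + (c ^^^ 2^i0) - 1 < j.val := by omega
        have hkn : 2^m + (c ^^^ 2^i0) - 1 < 2^n - 1 := by omega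
        refine ⟨⟨2^m + (c ^^^ 2^i0) - 1, hkn⟩, hkj, ?_⟩
        rw [hEj, enum_encode n m _ hγlt]
        have hsd := sdiff_flip (c := c) hmn hv1 hv3
        have hveq : ((⟨i0, by omega⟩ : Fin n), (1:Fin 3)) = v := by
          have h5 : (⟨i0, by omega⟩ : Fin n) = v.1 := Fin.ext rfl
          rw [h5, ← hv2]
        rw [hveq] at hsd
        exact erase_subset_of_sdiff_eq hsd
  rw [restrNum, hseteq, Set.ncard_coe_finset]
  -- now count
  have hnotmem : ((⟨m, hmn⟩ : Fin n), (2:Fin 3)) ∉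
      (Finset.univ.filter fun v : Fin n × Fin 3 =>
        (v.1:ℕ) < m ∧ v.2 = 1 ∧ c.testBit (v.1:ℕ) = true) := by
    simp only [Finset.mem_filter, Finset.mem_univ, true_and]
    rintro ⟨h, -, -⟩
    simp at h
  rw [hR, Finset.card_insert_of_notMem hnotmem]
  have hcard : (Finset.univ.filter fun v : Fin n × Fin 3 =>
      (v.1:ℕ) < m ∧ v.2 = 1 ∧ c.testBit (v.1:ℕ) = true).card
      = ((Finset.range m).filter (fun p => c.testBit p = true)).card := by
    apply Finset.card_bij' (i := fun v _ => (v.1 : ℕ))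
      (j := fun p hp =>
        (((⟨p, lt_trans (Finset.mem_range.1 (Finset.mem_filter.1 hp).1) hmn⟩ : Fin n),
          (1 : Fin 3)) : Fin n × Fin 3))
    case hi =>
      intro v hv
      simp only [Finset.mem_filter, Finset.mem_univ, true_and] at hv
      simp only [Finset.mem_filter, Finset.mem_range]
      exact ⟨hv.1, hv.2.2⟩
    case hj =>
      intro p hp
      have hp' := Finset.mem_filter.1 hp
      rw [Finset.mem_range] at hp'
      simp only [Finset.mem_filter, Finset.mem_univ, true_and]
      exact hp'
    case left_inv =>
      intro v hv
      simp only [Finset.mem_filter, Finset.mem_univ, true_and] at hv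
      obtain ⟨h1, h2, h3⟩ := hv
      rcases v with ⟨a, b⟩
      simp only at h2
      subst h2
      simp [Fin.eta]
    case right_inv =>
      intro p hp
      rfl
  rw [hcard, pc_congr hcj]
  have hdec : j.val + 1 = 2^m + c := by omega
  rw [hdec, pc_two_pow_add hcj]

end Stmt7z

namespace Stmt7w
open Stmt7 Stmt7x Stmt7y Stmt7z

lemma restrMultiset_enum (n : ℕ) (hn : 1 ≤ n) :
    restrMultiset (enum n) = ↑(List.map pc (List.range' 2 (2^n - 2))) := by
  unfold restrMultiset
  congr 1
  apply List.ext_getElem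
  · rw [List.length_tail, List.length_ofFn, List.length_map, List.length_range']
    omega
  · intro i h1 h2
    rw [List.length_tail, List.length_ofFn] at h1
    rw [List.getElem_tail, List.getElem_ofFn, List.getElem_map, List.getElem_range']
    have hr : restrNum (enum n) ⟨i+1, by omega⟩ = pc (i+1+1) :=
      restrNum_enum n ⟨i+1, by omega⟩ (Nat.succ_le_succ (Nat.zero_le i))
    have harg : 2 + 1*i = i + 1 + 1 := by omega
    rw [harg]
    exact hr

theorem main (n : ℕ) (hn : 2 ≤ n) :
    restrMultiset (enum (n+1)) =
      ({1, 2} : Multiset ℕ) + restrMultiset (enum n) +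
        (restrMultiset (enum n)).map (· + 1) := by
  rw [restrMultiset_enum n (by omega), restrMultiset_enum (n+1) (by omega)]
  have h2n : (2:ℕ) ≤ 2^n := by
    calc (2:ℕ) = 2^1 := rfl
      _ ≤ 2^n := Nat.pow_le_pow_right (by norm_num) (by omega)
  have e2 : (2:ℕ)^(n+1) - 2 = 2^n + (2^n - 2) := by
    have : (2:ℕ)^(n+1) = 2^n + 2^n := by ring
    omega
  -- split the big range
  have hsplit : List.range' 2 (2^(n+1) - 2) =
      List.range' 2 (2^n - 2) ++ List.range' (2^n) (2^n) := by
    rw [e2]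
    have := List.range'_append (s := 2) (m := 2^n - 2) (n := 2^n) (step := 1)
    rw [show 2 + 1 * (2^n - 2) = 2^n by omega] at this
    rw [Nat.add_comm (2^n) (2^n - 2), ← this]
  rw [hsplit, List.map_append]
  -- the shifted block
  have hshift : List.map pc (List.range' (2^n) (2^n)) =
      [1, 2] ++ List.map (fun k => pc k + 1) (List.range' 2 (2^n - 2)) := by
    rw [List.range'_eq_map_range, List.map_map]
    have hcong : List.map (pc ∘ (fun x => 2^n + x)) (List.range (2^n)) =
        List.map (fun k => pc k + 1) (List.range (2^n)) := by
      apply List.map_congr_left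
      intro a ha
      rw [List.mem_range] at ha
      exact pc_two_pow_add ha
    rw [hcong]
    have hr : List.range (2^n) = List.range' 0 2 ++ List.range' 2 (2^n - 2) := by
      rw [List.range_eq_range']
      have h0 := List.range'_append (s := 0) (m := 2) (n := 2^n - 2) (step := 1)
      rw [show 0 + 1 * 2 = 2 by omega] at h0
      conv_lhs => rw [show (2:ℕ)^n = 2^n - 2 + 2 by omega]
      rw [Nat.add_comm (2^n - 2) 2]
      exact h0.symm
    rw [hr, List.map_append]
    have h01 : List.map (fun k => pc k + 1) (List.range' 0 2) = [1, 2] := by decide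
    rw [h01]
  rw [hshift]
  -- multiset algebra
  have hmap : (↑(List.map pc (List.range' 2 (2^n - 2))) : Multiset ℕ).map (· + 1)
      = ↑(List.map (fun k => pc k + 1) (List.range' 2 (2^n - 2))) := by
    rw [Multiset.map_coe, List.map_map]
    rfl
  rw [hmap]
  rw [← Multiset.coe_add, ← Multiset.coe_add]
  have h12 : (↑([1, 2] : List ℕ) : Multiset ℕ) = ({1, 2} : Multiset ℕ) := rfl
  rw [h12]
  abel

end Stmt7w


/-- There are shellings of `Δₙ` and of `Δₙ₊₁` whose restriction-number multisets
`δₙ = {r₂, …, r_{tₙ}}` and `δₙ₊₁ = {r'₂, …, r'_{tₙ₊₁}}` satisfy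
`δₙ₊₁ = {1} ∪ δₙ ∪ {2} ∪ (δₙ + 1)` as multisets. -/
theorem stmt_7 (n : ℕ) (hn : 2 ≤ n) :
    ∃ (F : Fin (2 ^ n - 1) → Finset (Fin n × Fin 3))
      (F' : Fin (2 ^ (n + 1) - 1) → Finset (Fin (n + 1) × Fin 3)),
      IsShelling n (2 ^ n - 1) F ∧ IsShelling (n + 1) (2 ^ (n + 1) - 1) F' ∧
      restrMultiset F' =
        ({1, 2} : Multiset ℕ) + restrMultiset F + (restrMultiset F).map (· + 1) := by
  exact ⟨Stmt7y.enum n, Stmt7y.enum (n+1), Stmt7y.shelling_enum n (by omega),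
    Stmt7y.shelling_enum (n+1) (by omega), Stmt7w.main n hn⟩
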